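/- Suppose σ_m² > (2 + M/B) σ_b². Then E[(θ_avg − θ_b)²] > E[(θ_avg^B − θ_b)²] for any value of θ_m, i.e., the benign-only average has strictly smaller mean squared error about θ_b than the full average, regardless of the malicious mean. -/

import Mathlib

open MeasureTheory ProbabilityTheory Filter

/-- MSE decomposition: `E[(X-c)²] = Var X + (E X - c)²`. -/
lemma mse_decomp {Ω : Type*} [MeasureSpace Ω] [IsProbabilityMeasure (ℙ : Measure Ω)]
    (X : Ω → ℝ) (hX : MemLp X 2 ℙ) (c : ℝ) :
    ∫ ω, (X ω - c) ^ 2 ∂ℙ = variance X ℙ + ((∫ ω, X ω ∂ℙ) - c) ^ 2 := by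
  have hY : MemLp (fun ω => X ω - c) 2 ℙ := hX.sub (memLp_const c)
  have hint : ∫ ω, (X ω - c) ∂ℙ = (∫ ω, X ω ∂ℙ) - c := by
    rw [integral_sub (hX.integrable one_le_two) (integrable_const c), integral_const]
    simp
  have hv : variance (fun ω => X ω - c) ℙ = variance X ℙ := by
    rw [variance_eq_integral hY.aestronglyMeasurable.aemeasurable,
      variance_eq_integral hX.aestronglyMeasurable.aemeasurable, hint]
    congr 1
    funext ω
    ring
  have := variance_eq_sub hY
  rw [hv, hint] at this
  have h2 : ∫ ω, (X ω - c) ^ 2 ∂ℙ = (ℙ : Measure Ω)[(fun ω => X ω - c) ^ 2] := rfl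
  rw [h2]
  linarith [this]

/-- if `σm² > (2 + M/B) σb²`, then the benign-only average has
strictly smaller MSE about `θb` than the full average, for any `θm`. -/
theorem benign_mse_lt_full_mse
    {Ω : Type*} [MeasureSpace Ω] [IsProbabilityMeasure (ℙ : Measure Ω)]
    (B M : ℕ) (hB : 1 ≤ B) (hM : 1 ≤ M) (K : ℕ) (hK : K = B + M)
    (θ : Fin K → Ω → ℝ) (Benign : Finset (Fin K)) (hcard : Benign.card = B)
    (θb θm σb σm : ℝ)
    (hthr : σm ^ 2 > (2 + (M : ℝ) / (B : ℝ)) * σb ^ 2)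
    (hL2 : ∀ k, MemLp (θ k) 2 ℙ)
    (hindep : iIndepFun θ ℙ)
    (hmb : ∀ k ∈ Benign, ∫ ω, θ k ω ∂ℙ = θb)
    (hmm : ∀ k ∉ Benign, ∫ ω, θ k ω ∂ℙ = θm)
    (hvb : ∀ k ∈ Benign, variance (θ k) ℙ = σb ^ 2)
    (hvm : ∀ k ∉ Benign, variance (θ k) ℙ = σm ^ 2) :
    (∫ ω, (((K : ℝ))⁻¹ * (∑ k, θ k ω) - θb) ^ 2 ∂ℙ)
      > ∫ ω, (((B : ℝ))⁻¹ * (∑ k ∈ Benign, θ k ω) - θb) ^ 2 ∂ℙ := by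
  classical
  have hBpos : (0:ℝ) < (B:ℝ) := by exact_mod_cast hB
  have hMpos : (0:ℝ) < (M:ℝ) := by exact_mod_cast hM
  have hKval : (K:ℝ) = (B:ℝ) + (M:ℝ) := by rw [hK]; push_cast; ring
  have hKpos : (0:ℝ) < (K:ℝ) := by rw [hKval]; linarith
  -- pairwise independence on any finset
  have hpair : ∀ s : Finset (Fin K),
      Set.Pairwise ↑s fun i j => IndepFun (θ i) (θ j) ℙ :=
    fun s i _ j _ hij => hindep.indepFun hij
  -- variance of sums
  have hfun : ∀ s : Finset (Fin K), (fun ω => ∑ k ∈ s, θ k ω) = ∑ k ∈ s, θ k := by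
    intro s; ext ω; simp
  have hvsum : ∀ s : Finset (Fin K),
      variance (fun ω => ∑ k ∈ s, θ k ω) ℙ = ∑ k ∈ s, variance (θ k) ℙ := by
    intro s
    rw [hfun s]
    exact IndepFun.variance_sum (fun i _ => hL2 i) (hpair s)
  -- complement card
  have hcardc : Benignᶜ.card = M := by
    have := Finset.card_compl Benign
    rw [hcard] at this
    simp only [Fintype.card_fin] at this
    omega
  -- sums split
  have hvarfull : variance (fun ω => ∑ k, θ k ω) ℙ = (B:ℝ) * σb ^ 2 + (M:ℝ) * σm ^ 2 := by
    rw [hvsum Finset.univ, ← Finset.sum_add_sum_compl Benign]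
    rw [Finset.sum_congr rfl hvb, Finset.sum_congr rfl (fun k hk => hvm k (Finset.mem_compl.mp hk))]
    rw [Finset.sum_const, Finset.sum_const, hcard, hcardc]
    simp [mul_comm]
  have hvarben : variance (fun ω => ∑ k ∈ Benign, θ k ω) ℙ = (B:ℝ) * σb ^ 2 := by
    rw [hvsum Benign, Finset.sum_congr rfl hvb, Finset.sum_const, hcard]
    simp [mul_comm]
  -- means
  have hintsum : ∀ s : Finset (Fin K),
      ∫ ω, (∑ k ∈ s, θ k ω) ∂ℙ = ∑ k ∈ s, ∫ ω, θ k ω ∂ℙ :=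
    fun s => integral_finset_sum s (fun i _ => (hL2 i).integrable one_le_two)
  have hmfull : ∫ ω, (∑ k, θ k ω) ∂ℙ = (B:ℝ) * θb + (M:ℝ) * θm := by
    rw [hintsum Finset.univ, ← Finset.sum_add_sum_compl Benign]
    rw [Finset.sum_congr rfl hmb, Finset.sum_congr rfl (fun k hk => hmm k (Finset.mem_compl.mp hk))]
    rw [Finset.sum_const, Finset.sum_const, hcard, hcardc]
    simp [mul_comm]
  have hmben : ∫ ω, (∑ k ∈ Benign, θ k ω) ∂ℙ = (B:ℝ) * θb := by
    rw [hintsum Benign, Finset.sum_congr rfl hmb, Finset.sum_const, hcard]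
    simp [mul_comm]
  -- L2 membership of averages
  have hL2sum : ∀ s : Finset (Fin K), MemLp (fun ω => ∑ k ∈ s, θ k ω) 2 ℙ := by
    intro s
    rw [hfun s]
    exact memLp_finset_sum' s (fun i (_ : i ∈ s) => hL2 i)
  have hL2full : MemLp (fun ω => ((K:ℝ))⁻¹ * (∑ k, θ k ω)) 2 ℙ :=
    (hL2sum Finset.univ).const_mul _
  have hL2ben : MemLp (fun ω => ((B:ℝ))⁻¹ * (∑ k ∈ Benign, θ k ω)) 2 ℙ :=
    (hL2sum Benign).const_mul _
  -- decomposition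
  have hfull := mse_decomp _ hL2full θb
  have hben := mse_decomp _ hL2ben θb
  rw [hfull, hben]
  -- variances of scaled sums
  have hvf : variance (fun ω => ((K:ℝ))⁻¹ * (∑ k, θ k ω)) ℙ
      = ((K:ℝ))⁻¹ ^ 2 * ((B:ℝ) * σb ^ 2 + (M:ℝ) * σm ^ 2) := by
    rw [variance_const_mul, hvarfull]
  have hvb' : variance (fun ω => ((B:ℝ))⁻¹ * (∑ k ∈ Benign, θ k ω)) ℙ
      = ((B:ℝ))⁻¹ ^ 2 * ((B:ℝ) * σb ^ 2) := by
    rw [variance_const_mul, hvarben]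
  have hif : ∫ ω, ((K:ℝ))⁻¹ * (∑ k, θ k ω) ∂ℙ = ((K:ℝ))⁻¹ * ((B:ℝ) * θb + (M:ℝ) * θm) := by
    rw [integral_const_mul, hmfull]
  have hib : ∫ ω, ((B:ℝ))⁻¹ * (∑ k ∈ Benign, θ k ω) ∂ℙ = ((B:ℝ))⁻¹ * ((B:ℝ) * θb) := by
    rw [integral_const_mul, hmben]
  rw [hvf, hvb', hif, hib]
  have hbcancel : ((B:ℝ))⁻¹ * ((B:ℝ) * θb) - θb = 0 := by
    field_simp
    ring
  rw [hbcancel]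
  have hbias : (0:ℝ) ≤ (((K:ℝ))⁻¹ * ((B:ℝ) * θb + (M:ℝ) * θm) - θb) ^ 2 := sq_nonneg _
  have key : ((B:ℝ))⁻¹ ^ 2 * ((B:ℝ) * σb ^ 2) < ((K:ℝ))⁻¹ ^ 2 * ((B:ℝ) * σb ^ 2 + (M:ℝ) * σm ^ 2) := by
    have hBne : ((B:ℝ)) ≠ 0 := ne_of_gt hBpos
    have hKne : ((K:ℝ)) ≠ 0 := ne_of_gt hKpos
    have e1 : ((B:ℝ))⁻¹ ^ 2 * ((B:ℝ) * σb ^ 2) = σb ^ 2 / (B:ℝ) := by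
      field_simp
    have e2 : ((K:ℝ))⁻¹ ^ 2 * ((B:ℝ) * σb ^ 2 + (M:ℝ) * σm ^ 2)
        = ((B:ℝ) * σb ^ 2 + (M:ℝ) * σm ^ 2) / (K:ℝ) ^ 2 := by
      field_simp
    rw [e1, e2, div_lt_div_iff₀ hBpos (by positivity)]
    have hthr' : (2 * (B:ℝ) + (M:ℝ)) * σb ^ 2 < (B:ℝ) * σm ^ 2 := by
      have h := (mul_lt_mul_of_pos_right hthr hBpos)
      calc (2 * (B:ℝ) + (M:ℝ)) * σb ^ 2 = (2 + (M:ℝ)/(B:ℝ)) * σb ^ 2 * (B:ℝ) := by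
            field_simp
        _ < σm ^ 2 * (B:ℝ) := h
        _ = (B:ℝ) * σm ^ 2 := by ring
    have hmul := mul_lt_mul_of_pos_left hthr' hMpos
    rw [hKval]
    nlinarith [hmul, sq_nonneg σb]
  have h0 : ((0:ℝ)) ^ 2 = 0 := by norm_num
  rw [h0, add_zero]
  linarith [hbias, key]
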